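/- arXiv:2511.09967 — 7 statements merged into one kernel-verified Lean document; each statement's English description precedes it below -/
import Mathlib

section
/- Define, for parameters r, p, ω, π, e, g ∈ ℝ, the function ΔuTTC : [0,1] → ℝ by ΔuTTC(s) = r·2π·(e−g) − ω·p for s ∈ [0,g]; ΔuTTC(s) = r·((1−2π)·(s−g) + 2π·(e−g)) − ω·p for s ∈ [g, e−g]; ΔuTTC(s) = r·(π·(s+e−g) + (1−2π)·(s−g)) − ω·p for s ∈ [e−g, e+g]; and ΔuTTC(s) = r·(s−g) − ω·p for s ∈ [e+g, 1]. If r > 0, 0 < π < 1/2, 0 ≤ g, e > 2g and e+g ≤ 1, then the formulas agree at the junction points s = g, s = e−g and s = e+g (so ΔuTTC is well defined and continuous), ΔuTTC is constant on [0,g], strictly increasing on [g,1], and when p = 0 one has ΔuTTC(g) = 2·r·π·(e−g) > 0. -/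
/-- The expected utility gain of living in the oversubscribed neighborhood `n₁`
rather than `n₀` under Top Trading Cycles, as a function of the signal `s`. -/
noncomputable def ΔuTTC (r p ω π e g : ℝ) (s : ℝ) : ℝ :=
  if s ≤ g then r * (2 * π * (e - g)) - ω * p
  else if s ≤ e - g then r * ((1 - 2 * π) * (s - g) + 2 * π * (e - g)) - ω * p
  else if s ≤ e + g then r * (π * (s + e - g) + (1 - 2 * π) * (s - g)) - ω * p
  else r * (s - g) - ω * p

set_option maxHeartbeats 2000000 in
theorem stmt_1 (r p ω π e g : ℝ) (hr : 0 < r) (hπ0 : 0 < π) (hπ1 : π < 1 / 2)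
    (hg : 0 ≤ g) (he : 2 * g < e) (heg : e + g ≤ 1) :
    -- the first and second formulas agree at the junction point `s = g`
    (r * (2 * π * (e - g)) - ω * p
      = r * ((1 - 2 * π) * (g - g) + 2 * π * (e - g)) - ω * p) ∧
    -- the second and third formulas agree at the junction point `s = e - g`
    (r * ((1 - 2 * π) * ((e - g) - g) + 2 * π * (e - g)) - ω * p
      = r * (π * ((e - g) + e - g) + (1 - 2 * π) * ((e - g) - g)) - ω * p) ∧
    -- the third and fourth formulas agree at the junction point `s = e + g`
    (r * (π * ((e + g) + e - g) + (1 - 2 * π) * ((e + g) - g)) - ω * p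
      = r * ((e + g) - g) - ω * p) ∧
    -- `ΔuTTC` is constant on `[0, g]`
    (∀ s ∈ Set.Icc 0 g, ΔuTTC r p ω π e g s = ΔuTTC r p ω π e g g) ∧
    -- `ΔuTTC` is strictly increasing on `[g, 1]`
    StrictMonoOn (ΔuTTC r p ω π e g) (Set.Icc g 1) ∧
    -- when `p = 0`, the value at `s = g` is `2·r·π·(e−g) > 0`
    (ΔuTTC r 0 ω π e g g = 2 * r * π * (e - g) ∧ 0 < 2 * r * π * (e - g)) := by
  have heg0 : g < e - g := by linarith
  refine ⟨by ring_nf, by ring, by ring, ?_, ?_, ?_, ?_⟩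
  · intro s hs
    simp [ΔuTTC, hs.2]
  · intro s hs t ht hst
    unfold ΔuTTC
    split_ifs with h1 h2 h3 h4 h5 h6 h7 h8 h9 h10 h11 h12 h13 h14 h15 <;>
      first
        | (exfalso; linarith)
        | (rw [sub_lt_sub_iff_right, mul_lt_mul_iff_right₀ hr];
           nlinarith [hs.1, hs.2, ht.1, ht.2, hπ0, hπ1, hst,
             mul_pos hπ0 (sub_pos.2 hst),
             mul_pos (by linarith : (0:ℝ) < 1 - 2 * π) (sub_pos.2 hst)])
  · simp [ΔuTTC]; ring
  · have : 0 < e - g := by linarith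
    positivity
end

section
/- Let ι be a finite nonempty index type, ρ : ι → ℝ strictly positive weights with ∑ᵢ ρᵢ = 1, and ω : ι → ℝ. Let F : ℝ → ℝ be concave on [0,1] and strictly increasing on [0,1]. Let d₁ > d₂ ≥ 0 be reals and let s¹, s² : ι → [0,1] satisfy s¹ᵢ − s¹ⱼ = d₁·(ωᵢ − ωⱼ) and s²ᵢ − s²ⱼ = d₂·(ωᵢ − ωⱼ) for all i, j ∈ ι, together with the market-clearing condition ∑ᵢ ρᵢ·F(s¹ᵢ) = ∑ᵢ ρᵢ·F(s²ᵢ). Then ∑ᵢ ρᵢ·s¹ᵢ ≥ ∑ᵢ ρᵢ·s²ᵢ. -/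
/-!
Every profile with pairwise differences `d • (ωᵢ - ωⱼ)` is its weighted mean plus `d • (ωᵢ - ω̄)`.
If the mean `m₂` of `s₂` exceeded the mean `m₁` of `s₁`, contract `s₁` toward `m₁` by the factor
`d₂ / d₁`: the result `u` has dispersion `d₂` and mean `m₁`, so `u < s₂` pointwise. By concavity
(pointwise, then Jensen for `F m₁`) the contraction does not lower `∑ ρᵢ F`, while strict
monotonicity makes `∑ ρᵢ F (uᵢ) < ∑ ρᵢ F (s₂ᵢ)`, contradicting market clearing.
-/

open Finset

theorem eq_sum_mul_add_of_sub_eq_mul {ι R : Type*} [Fintype ι] [CommRing R] {ρ s ω : ι → R}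
    {d : R} (hρ : ∑ i, ρ i = 1) (h : ∀ i j, s i - s j = d * (ω i - ω j)) (i : ι) :
    s i = ∑ j, ρ j * s j + d * (ω i - ∑ j, ρ j * ω j) := by
  have hsum : ∑ j, ρ j * (s i - s j) = d * ∑ j, ρ j * (ω i - ω j) := by
    rw [mul_sum]
    exact sum_congr rfl fun j _ => by rw [h i j]; ring
  simp only [mul_sub, sum_sub_distrib, ← sum_mul, hρ, one_mul] at hsum
  linear_combination hsum

theorem ConcaveOn.sum_mul_le_sum_mul_contract {ι E : Type*} [AddCommGroup E] [Module ℝ E]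
    {S : Set E} {F : E → ℝ} (hF : ConcaveOn ℝ S F) {ρ : ι → ℝ} {t : Finset ι}
    (hρ₀ : ∀ i ∈ t, 0 ≤ ρ i) (hρ₁ : ∑ i ∈ t, ρ i = 1) {p : ι → E} (hp : ∀ i ∈ t, p i ∈ S)
    {c : ℝ} (hc₀ : 0 ≤ c) (hc₁ : c ≤ 1) :
    ∑ i ∈ t, ρ i * F (p i) ≤ ∑ i ∈ t, ρ i * F (c • p i + (1 - c) • ∑ j ∈ t, ρ j • p j) := by
  set m := ∑ j ∈ t, ρ j • p j
  have hjensen : ∑ i ∈ t, ρ i * F (p i) ≤ F m := by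
    simpa only [smul_eq_mul] using hF.le_map_sum hρ₀ hρ₁ hp
  have hm : m ∈ S := hF.1.sum_mem hρ₀ hρ₁ hp
  have hpointwise : ∀ i ∈ t, c * F (p i) + (1 - c) * F m ≤ F (c • p i + (1 - c) • m) :=
    fun i hi => hF.2 (hp i hi) hm hc₀ (by linarith) (by ring)
  calc ∑ i ∈ t, ρ i * F (p i)
      ≤ c * ∑ i ∈ t, ρ i * F (p i) + (1 - c) * F m := by
        linarith [mul_le_mul_of_nonneg_left hjensen (sub_nonneg.2 hc₁)]
    _ = ∑ i ∈ t, ρ i * (c * F (p i) + (1 - c) * F m) := by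
      simp only [mul_add, sum_add_distrib, mul_sum, ← sum_mul, hρ₁]; ring_nf
    _ ≤ ∑ i ∈ t, ρ i * F (c • p i + (1 - c) • m) :=
      sum_le_sum fun i hi => mul_le_mul_of_nonneg_left (hpointwise i hi) (hρ₀ i hi)

theorem stmt_2 {ι : Type*} [Fintype ι] [Nonempty ι]
    (ρ ω : ι → ℝ) (hρ : ∀ i, 0 < ρ i) (hsum : ∑ i, ρ i = 1)
    (F : ℝ → ℝ) (hFconc : ConcaveOn ℝ (Set.Icc 0 1) F)
    (hFmono : StrictMonoOn F (Set.Icc 0 1))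
    (d₁ d₂ : ℝ) (hd : d₂ < d₁) (hd₂ : 0 ≤ d₂)
    (s₁ s₂ : ι → ℝ)
    (hs₁ : ∀ i, s₁ i ∈ Set.Icc (0 : ℝ) 1) (hs₂ : ∀ i, s₂ i ∈ Set.Icc (0 : ℝ) 1)
    (hdiff₁ : ∀ i j, s₁ i - s₁ j = d₁ * (ω i - ω j))
    (hdiff₂ : ∀ i j, s₂ i - s₂ j = d₂ * (ω i - ω j))
    (hmc : ∑ i, ρ i * F (s₁ i) = ∑ i, ρ i * F (s₂ i)) :
    ∑ i, ρ i * s₂ i ≤ ∑ i, ρ i * s₁ i := by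
  by_contra! hlt
  have hd₁ : 0 < d₁ := hd₂.trans_lt hd
  set c := d₂ / d₁
  have hc₀ : 0 ≤ c := div_nonneg hd₂ hd₁.le
  have hc₁ : c ≤ 1 := div_le_one_of_le₀ hd.le hd₁.le
  have hρ₀ : ∀ i ∈ univ, 0 ≤ ρ i := fun i _ => (hρ i).le
  set u : ι → ℝ := fun i => c • s₁ i + (1 - c) • ∑ j, ρ j • s₁ j
  have hu_mem : ∀ i, u i ∈ Set.Icc (0 : ℝ) 1 := fun i =>
    convex_Icc 0 1 (hs₁ i) ((convex_Icc 0 1).sum_mem hρ₀ hsum fun j _ => hs₁ j)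
      hc₀ (sub_nonneg.2 hc₁) (by ring)
  have hu_lt : ∀ i, u i < s₂ i := by
    intro i
    have h₁ := eq_sum_mul_add_of_sub_eq_mul hsum hdiff₁ i
    have h₂ := eq_sum_mul_add_of_sub_eq_mul hsum hdiff₂ i
    have hcd : c * d₁ = d₂ := div_mul_cancel₀ d₂ hd₁.ne'
    simp only [u, smul_eq_mul]
    rw [h₁]
    linear_combination (ω i - ∑ j, ρ j * ω j) * hcd - h₂ + hlt
  have hcontract : ∑ i, ρ i * F (s₁ i) ≤ ∑ i, ρ i * F (u i) :=
    hFconc.sum_mul_le_sum_mul_contract hρ₀ hsum (fun i _ => hs₁ i) hc₀ hc₁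
  have hstrict : ∑ i, ρ i * F (u i) < ∑ i, ρ i * F (s₂ i) :=
    sum_lt_sum_of_nonempty univ_nonempty fun i _ =>
      mul_lt_mul_of_pos_left (hFmono (hu_mem i) (hs₂ i) (hu_lt i)) (hρ i)
  linarith
end

section
/- Let ι be a finite nonempty index type, ρ : ι → ℝ strictly positive weights with ∑ᵢ ρᵢ = 1, and ω : ι → ℝ nonconstant (there exist i, j with ωᵢ ≠ ωⱼ). Let F : ℝ → ℝ be strictly increasing on [0,1]. Let d₁ > d₂ ≥ 0 and let s¹, s² : ι → [0,1] satisfy s¹ᵢ − s¹ⱼ = d₁·(ωᵢ − ωⱼ) and s²ᵢ − s²ⱼ = d₂·(ωᵢ − ωⱼ) for all i, j ∈ ι, and ∑ᵢ ρᵢ·F(s¹ᵢ) = ∑ᵢ ρᵢ·F(s²ᵢ). Then: (i) for all i, j with ωᵢ > ωⱼ one has s¹ᵢ − s²ᵢ > s¹ⱼ − s²ⱼ; and (ii) there exist indices i and j with s¹ᵢ > s²ᵢ and s¹ⱼ < s²ⱼ. -/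
open Finset

theorem stmt_5 {ι : Type*} [Fintype ι] [Nonempty ι]
    (ρ ω : ι → ℝ) (hρ : ∀ i, 0 < ρ i) (hsum : ∑ i, ρ i = 1)
    (hω : ∃ i j, ω i ≠ ω j)
    (F : ℝ → ℝ) (hFmono : StrictMonoOn F (Set.Icc 0 1))
    (d₁ d₂ : ℝ) (hd : d₂ < d₁) (hd₂ : 0 ≤ d₂)
    (s₁ s₂ : ι → ℝ)
    (hs₁ : ∀ i, s₁ i ∈ Set.Icc (0 : ℝ) 1) (hs₂ : ∀ i, s₂ i ∈ Set.Icc (0 : ℝ) 1)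
    (hdiff₁ : ∀ i j, s₁ i - s₁ j = d₁ * (ω i - ω j))
    (hdiff₂ : ∀ i j, s₂ i - s₂ j = d₂ * (ω i - ω j))
    (hmc : ∑ i, ρ i * F (s₁ i) = ∑ i, ρ i * F (s₂ i)) :
    -- (i) the cutoff change is strictly increasing in the wealth parameter
    (∀ i j, ω j < ω i → s₁ j - s₂ j < s₁ i - s₂ i) ∧
    -- (ii) some cutoff strictly rises and some cutoff strictly falls
    (∃ i j, s₂ i < s₁ i ∧ s₁ j < s₂ j) := by
  have part1 : ∀ i j, ω j < ω i → s₁ j - s₂ j < s₁ i - s₂ i := by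
    intro i j h
    have h1 := hdiff₁ i j
    have h2 := hdiff₂ i j
    nlinarith [mul_pos (sub_pos.2 hd) (sub_pos.2 h)]
  refine ⟨part1, ?_⟩
  -- if s₁ = s₂ pointwise, contradiction with part1 and hω
  have eqall : ¬ (∀ i, s₁ i = s₂ i) := by
    intro hall
    obtain ⟨i, j, hne⟩ := hω
    rcases hne.lt_or_gt with h | h
    · have := part1 j i h; rw [hall i, hall j] at this; linarith
    · have := part1 i j h; rw [hall i, hall j] at this; linarith
  by_contra hcon
  push_neg at hcon
  have key : ∀ (a b : ι → ℝ), (∀ i, a i ∈ Set.Icc (0:ℝ) 1) → (∀ i, b i ∈ Set.Icc (0:ℝ) 1) →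
      (∀ i, a i ≤ b i) → (∑ i, ρ i * F (a i) = ∑ i, ρ i * F (b i)) → ∀ i, a i = b i := by
    intro a b ha hb hle hsum2 i
    have hFle : ∀ k, ρ k * F (a k) ≤ ρ k * F (b k) := fun k =>
      mul_le_mul_of_nonneg_left (hFmono.monotoneOn (ha k) (hb k) (hle k)) (hρ k).le
    have heq : ∀ k ∈ Finset.univ, ρ k * F (a k) = ρ k * F (b k) :=
      (Finset.sum_eq_sum_iff_of_le (fun k _ => hFle k)).1 hsum2
    have hFe : F (a i) = F (b i) :=
      mul_left_cancel₀ (hρ i).ne' (heq i (Finset.mem_univ i))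
    exact hFmono.injOn (ha i) (hb i) hFe
  rcases forall_or_exists_not (fun i => s₁ i ≤ s₂ i) with hA | ⟨i, hi⟩
  · exact eqall (key s₁ s₂ hs₁ hs₂ hA hmc)
  · push_neg at hi
    have hB : ∀ j, s₂ j ≤ s₁ j := fun j => hcon i j hi
    exact eqall fun k => (key s₂ s₁ hs₂ hs₁ hB hmc.symm k).symm
end

section
/- Let F : ℝ → ℝ be any function and let π, e, g, q, sN, sDA be reals. Define D(s) := (1−π)·(F(s) − F(g)) + π·(F(g) + F(e−g)), S(s) := π·(F(e+g) − F(s)), D̄ := (1−π)·((1−q) − F(g)) + π·(F(g) + F(e−g)), S̄ := π·(F(e+g) − (1−q)), and r := (D̄ − S̄)/D̄. Assume D̄ > 0 and r·(1−π) > 0, and set a := F(sN) − (1−q) and b := F(sDA) − (1−q). If a > 0, b > 0 and b/a > 1/(r·(1−π)), then (1 − F(sDA)) + (1−r)·D(sDA) − S(sDA) < 1 − F(sN); symmetrically, if a < 0, b < 0 and b/a > 1/(r·(1−π)), then (1 − F(sDA)) + (1−r)·D(sDA) − S(sDA) > 1 − F(sN). -/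
/-- Ex post out-of-zone demand for school `c₁` for a wealth type with cutoff `s`. -/
noncomputable def Ddem (F : ℝ → ℝ) (π e g s : ℝ) : ℝ :=
  (1 - π) * (F s - F g) + π * (F g + F (e - g))

/-- Ex post supply of `c₁` seats vacated by in-zone residents with cutoff `s`. -/
noncomputable def Ssup (F : ℝ → ℝ) (π e g s : ℝ) : ℝ :=
  π * (F (e + g) - F s)

/-- Aggregate (market-clearing) demand for school `c₁`. -/
noncomputable def Dbar (F : ℝ → ℝ) (π e g q : ℝ) : ℝ :=
  (1 - π) * ((1 - q) - F g) + π * (F g + F (e - g))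

/-- Aggregate (market-clearing) supply of vacated `c₁` seats. -/
noncomputable def Sbar (F : ℝ → ℝ) (π e g q : ℝ) : ℝ :=
  π * (F (e + g) - (1 - q))

/-- The Deferred Acceptance rejection probability. -/
noncomputable def rDA (F : ℝ → ℝ) (π e g q : ℝ) : ℝ :=
  (Dbar F π e g q - Sbar F π e g q) / Dbar F π e g q

theorem stmt_8 (F : ℝ → ℝ) (π e g q sN sDA : ℝ)
    (hD : 0 < Dbar F π e g q) (hr : 0 < rDA F π e g q * (1 - π)) :
    -- if both gaps are positive and the expansion rate exceeds `1/(r·(1−π))`,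
    -- the per-type mass at `c₁` strictly decreases from N to DA
    ((0 < F sN - (1 - q) → 0 < F sDA - (1 - q) →
      1 / (rDA F π e g q * (1 - π)) < (F sDA - (1 - q)) / (F sN - (1 - q)) →
      (1 - F sDA) + (1 - rDA F π e g q) * Ddem F π e g sDA - Ssup F π e g sDA
        < 1 - F sN)) ∧
    -- symmetrically, if both gaps are negative, the mass strictly increases
    ((F sN - (1 - q) < 0 → F sDA - (1 - q) < 0 →
      1 / (rDA F π e g q * (1 - π)) < (F sDA - (1 - q)) / (F sN - (1 - q)) →
      1 - F sN
        < (1 - F sDA) + (1 - rDA F π e g q) * Ddem F π e g sDA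
          - Ssup F π e g sDA)) := by
  have hD' : Dbar F π e g q ≠ 0 := ne_of_gt hD
  have key : (1 - F sDA) + (1 - rDA F π e g q) * Ddem F π e g sDA - Ssup F π e g sDA
      - (1 - F sN)
      = (F sN - (1 - q)) - (F sDA - (1 - q)) * (rDA F π e g q * (1 - π)) := by
    unfold Ddem Ssup rDA
    field_simp
    unfold Sbar Dbar
    ring
  set c := rDA F π e g q * (1 - π) with hc
  constructor
  · intro ha hb h
    have h2 : 1 * (F sN - (1 - q)) < (F sDA - (1 - q)) * c :=
      (div_lt_div_iff₀ hr ha).mp h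
    linarith
  · intro ha hb h
    have h' : 1 / c < (-(F sDA - (1 - q))) / (-(F sN - (1 - q))) := by
      rwa [neg_div_neg_eq]
    have h2 : 1 * (-(F sN - (1 - q))) < (-(F sDA - (1 - q))) * c :=
      (div_lt_div_iff₀ hr (by linarith)).mp h'
    linarith
end

section
/- Let F : ℝ → ℝ be any function and let π, e, g, q, sN, sT be reals. Define D(s), S(s), X(s), D̄, S̄, X̄ as follows: D(s) := (1−π)·(F(s) − F(g)) + π·(F(g) + F(e−g)), S(s) := π·(F(e+g) − F(s)), X(s) := π·(F(e−g) − F(s)), D̄ := (1−π)·((1−q) − F(g)) + π·(F(g) + F(e−g)), S̄ := π·(F(e+g) − (1−q)), X̄ := π·(F(e−g) − (1−q)), and r := (D̄ − S̄)/(D̄ − X̄). Assume D̄ − X̄ > 0 and r > 0, and set a := F(sN) − (1−q) and b := F(sT) − (1−q). If a > 0, b > 0 and b/a > 1/r, then (1 − F(sT)) + (1−r)·(D(sT) − X(sT)) − (S(sT) − X(sT)) < 1 − F(sN); symmetrically, if a < 0, b < 0 and b/a > 1/r, then (1 − F(sT)) + (1−r)·(D(sT) − X(sT)) − (S(sT)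 − X(sT)) > 1 − F(sN). -/
/-- Mass of in-zone residents pointing to another oversubscribed school. -/
noncomputable def Xres (F : ℝ → ℝ) (π e g s : ℝ) : ℝ :=
  π * (F (e - g) - F s)

/-- Aggregate mass of in-zone residents pointing to another oversubscribed school. -/
noncomputable def Xbar (F : ℝ → ℝ) (π e g q : ℝ) : ℝ :=
  π * (F (e - g) - (1 - q))

/-- The Top Trading Cycles rejection probability for outside applicants. -/
noncomputable def rTTC (F : ℝ → ℝ) (π e g q : ℝ) : ℝ :=
  (Dbar F π e g q - Sbar F π e g q) / (Dbar F π e g q - Xbar F π e g q)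

theorem stmt_9 (F : ℝ → ℝ) (π e g q sN sT : ℝ)
    (hD : 0 < Dbar F π e g q - Xbar F π e g q) (hr : 0 < rTTC F π e g q) :
    -- if both gaps are positive and the expansion rate exceeds `1/r`,
    -- the per-type mass at `c₁` strictly decreases from N to TTC
    ((0 < F sN - (1 - q) → 0 < F sT - (1 - q) →
      1 / rTTC F π e g q < (F sT - (1 - q)) / (F sN - (1 - q)) →
      (1 - F sT) + (1 - rTTC F π e g q) * (Ddem F π e g sT - Xres F π e g sT)
        - (Ssup F π e g sT - Xres F π e g sT) < 1 - F sN)) ∧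
    -- symmetrically, if both gaps are negative, the mass strictly increases
    ((F sN - (1 - q) < 0 → F sT - (1 - q) < 0 →
      1 / rTTC F π e g q < (F sT - (1 - q)) / (F sN - (1 - q)) →
      1 - F sN
        < (1 - F sT) + (1 - rTTC F π e g q) * (Ddem F π e g sT - Xres F π e g sT)
          - (Ssup F π e g sT - Xres F π e g sT))) := by
  set r := rTTC F π e g q with hrdef
  have hmul : r * (Dbar F π e g q - Xbar F π e g q)
      = Dbar F π e g q - Sbar F π e g q := by
    rw [hrdef, rTTC, div_mul_cancel₀ _ hD.ne']
  constructor
  · intro ha hb hlt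
    rw [div_lt_div_iff₀ hr ha] at hlt
    simp only [Ddem, Ssup, Xres, Dbar, Sbar, Xbar] at *
    nlinarith [hmul, hlt]
  · intro ha hb hlt
    rw [lt_div_iff_of_neg ha, one_div_mul_eq_div, lt_div_iff₀ hr] at hlt
    simp only [Ddem, Ssup, Xres, Dbar, Sbar, Xbar] at *
    nlinarith [hmul, hlt]
end

section
/- Let π, e, g, q, E_N, E_DA, r be reals with 0 < π < 1, e > 0, 0 < q < 1, 0 ≤ g, g < E_N, E_N ≤ E_DA, E_N ≤ 1 − q, g < 1 − q, and r ≥ (1−q−g)/((1−π)·(1−q−g) + π·e). Then r·((1−π)·(E_DA − g) + π·e) ≥ E_N − g. -/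
theorem stmt_11 (π e g q E_N E_DA r : ℝ)
    (hπ0 : 0 < π) (hπ1 : π < 1) (he : 0 < e) (hq0 : 0 < q) (hq1 : q < 1)
    (hg : 0 ≤ g) (hgE : g < E_N) (hEE : E_N ≤ E_DA) (hEq : E_N ≤ 1 - q)
    (hgq : g < 1 - q)
    (hr : r ≥ (1 - q - g) / ((1 - π) * (1 - q - g) + π * e)) :
    r * ((1 - π) * (E_DA - g) + π * e) ≥ E_N - g := by
  have hD : 0 < (1 - π) * (1 - q - g) + π * e := by nlinarith
  have hDa : 0 < (1 - π) * (E_N - g) + π * e := by nlinarith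
  have hr0 : 0 ≤ r := le_trans (div_nonneg (by linarith) hD.le) hr
  have h1 : r * ((1 - π) * (E_DA - g) + π * e) ≥ r * ((1 - π) * (E_N - g) + π * e) := by
    apply mul_le_mul_of_nonneg_left _ hr0
    nlinarith
  have h2 : (1 - q - g) / ((1 - π) * (1 - q - g) + π * e) * ((1 - π) * (E_N - g) + π * e)
      ≥ E_N - g := by
    rw [ge_iff_le, div_mul_eq_mul_div, le_div_iff₀ hD]
    nlinarith [mul_nonneg (mul_pos hπ0 he).le (show (0:ℝ) ≤ (1-q-g)-(E_N-g) by linarith)]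
  calc r * ((1 - π) * (E_DA - g) + π * e)
      ≥ r * ((1 - π) * (E_N - g) + π * e) := h1
    _ ≥ (1 - q - g) / ((1 - π) * (1 - q - g) + π * e) * ((1 - π) * (E_N - g) + π * e) :=
        mul_le_mul_of_nonneg_right hr hDa.le
    _ ≥ E_N - g := h2
end

section
/- Let π, e, g, q, Fg, Femg be reals with 0 < π < 1/2, 0 < q < 1, 0 ≤ g ≤ Fg, Fg < 1 − q, 1 − q < e − g, and e − g ≤ Femg. Then ((1−q) − (1−2π)·Fg) / ((1−π)·(1−q) − (1−2π)·Fg + π·Femg) < ((1−2π)·(1−q−g) + 2π·(e−g)) / ((1−π)·(1−q−g) + π·e). -/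
theorem stmt_12 (π e g q Fg Femg : ℝ)
    (hπ0 : 0 < π) (hπ1 : π < 1 / 2) (hq0 : 0 < q) (hq1 : q < 1)
    (hg0 : 0 ≤ g) (hgFg : g ≤ Fg) (hFg : Fg < 1 - q) (hqe : 1 - q < e - g)
    (hFemg : e - g ≤ Femg) :
    ((1 - q) - (1 - 2 * π) * Fg)
        / ((1 - π) * (1 - q) - (1 - 2 * π) * Fg + π * Femg)
      < ((1 - 2 * π) * (1 - q - g) + 2 * π * (e - g))
        / ((1 - π) * (1 - q - g) + π * e) := by
  have h2π : 0 < 1 - 2 * π := by linarith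
  have hB : 0 < (1 - π) * (1 - q) - (1 - 2 * π) * Fg + π * Femg := by nlinarith
  have hD : 0 < (1 - π) * (1 - q - g) + π * e := by nlinarith
  rw [div_lt_div_iff₀ hB hD]
  nlinarith [mul_pos hπ0 h2π, mul_nonneg hg0 hπ0.le, sq_nonneg π,
    mul_pos hπ0 (sub_pos.2 hFg), mul_pos (mul_pos hπ0 h2π) (sub_pos.2 hFg),
    mul_nonneg (mul_pos hπ0 h2π).le (sub_nonneg.2 hFemg),
    mul_nonneg (mul_pos hπ0 hπ0).le (sub_nonneg.2 hFemg),
    mul_pos (mul_pos hπ0 hπ0) (sub_pos.2 hqe),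
    mul_pos (mul_pos hπ0 h2π) (sub_pos.2 hqe)]
end
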